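/- arXiv:2112.15392 — 2 statements merged into one kernel-verified Lean document; each statement's English description precedes it below -/
import Mathlib

section
/- Let f: ℝ^d → ℝ be differentiable with L-Lipschitz gradient and with inf f > -∞. Then for any η ∈ (0, 2/L), the gradient descent iterates w_{n+1} = w_n - η∇f(w_n) satisfy ‖∇f(w_n)‖ → 0 as n → ∞. -/
/-! The descent lemma `f (x + v) ≤ f x + ⟪∇f x, v⟫ + L / 2 * ‖v‖ ^ 2` shows that a gradient step
lowers `f` by at least `η (1 - L η / 2) ‖∇f (w n)‖²`, a positive multiple of the squared gradient
because `η < 2 / L`. Telescoping against the lower bound of `f` makes `∑ ‖∇f (w n)‖²` finite, so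
its terms tend to `0`. -/

open RealInnerProductSpace Filter

section Descent

variable {E : Type*} [NormedAddCommGroup E] [InnerProductSpace ℝ E] [CompleteSpace E]
  {f : E → ℝ}

theorem DifferentiableAt.hasDerivAt_comp_add_smul {x v : E} {t : ℝ}
    (hf : DifferentiableAt ℝ f (x + t • v)) :
    HasDerivAt (fun s : ℝ => f (x + s • v)) ⟪gradient f (x + t • v), v⟫ t := by
  have hline : HasDerivAt (fun s : ℝ => x + s • v) v t := by
    simpa using ((hasDerivAt_id t).smul_const v).const_add x
  simpa [InnerProductSpace.toDual_apply_apply, Function.comp_def] using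
    hf.hasGradientAt.hasFDerivAt.comp_hasDerivAt t hline

theorem LipschitzWith.inner_gradient_add_smul_sub_le {K : NNReal}
    (hlip : LipschitzWith K (gradient f)) (x v : E) {t : ℝ} (ht : 0 ≤ t) :
    ⟪gradient f (x + t • v) - gradient f x, v⟫ ≤ K * t * ‖v‖ ^ 2 :=
  calc ⟪gradient f (x + t • v) - gradient f x, v⟫
      ≤ ‖gradient f (x + t • v) - gradient f x‖ * ‖v‖ := real_inner_le_norm _ _
    _ ≤ K * ‖t • v‖ * ‖v‖ := by
        gcongr
        simpa [dist_eq_norm] using hlip.dist_le_mul (x + t • v) x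
    _ = K * t * ‖v‖ ^ 2 := by
        rw [norm_smul, Real.norm_of_nonneg ht]; ring

theorem Differentiable.apply_add_le_of_lipschitzWith_gradient {K : NNReal}
    (hf : Differentiable ℝ f) (hlip : LipschitzWith K (gradient f)) (x v : E) :
    f (x + v) ≤ f x + ⟪gradient f x, v⟫ + K / 2 * ‖v‖ ^ 2 := by
  set g : ℝ → ℝ := fun t => f (x + t • v) - t * ⟪gradient f x, v⟫ - K / 2 * ‖v‖ ^ 2 * t ^ 2
  have hg : ∀ t, HasDerivAt g
      (⟪gradient f (x + t • v), v⟫ - ⟪gradient f x, v⟫ - K * ‖v‖ ^ 2 * t) t := by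
    intro t
    have hline := (hf (x + t • v)).hasDerivAt_comp_add_smul
    have hlin := (hasDerivAt_id t).mul_const ⟪gradient f x, v⟫
    have hquad := (hasDerivAt_pow 2 t).const_mul (K / 2 * ‖v‖ ^ 2)
    refine ((hline.sub hlin).sub hquad).congr_deriv ?_
    norm_num; ring
  have hanti : AntitoneOn g (Set.Icc 0 1) := by
    refine antitoneOn_of_deriv_nonpos (convex_Icc 0 1)
      (fun t _ => (hg t).continuousAt.continuousWithinAt)
      (fun t _ => (hg t).differentiableAt.differentiableWithinAt) fun t ht => ?_
    rw [interior_Icc] at ht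
    have := hlip.inner_gradient_add_smul_sub_le x v ht.1.le
    rw [inner_sub_left] at this
    rw [(hg t).deriv]
    linarith
  have := hanti (Set.left_mem_Icc.2 zero_le_one) (Set.right_mem_Icc.2 zero_le_one) zero_le_one
  simp only [g, zero_smul, add_zero, one_smul, one_pow, mul_one, zero_mul, sub_zero,
    zero_pow two_ne_zero, mul_zero] at this
  linarith

theorem Differentiable.apply_sub_smul_gradient_le {K : NNReal} (hf : Differentiable ℝ f)
    (hlip : LipschitzWith K (gradient f)) (x : E) (η : ℝ) :
    f (x - η • gradient f x) ≤ f x - η * (1 - K * η / 2) * ‖gradient f x‖ ^ 2 := by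
  have := hf.apply_add_le_of_lipschitzWith_gradient hlip x (-(η • gradient f x))
  rw [← sub_eq_add_neg, inner_neg_right, real_inner_smul_right, real_inner_self_eq_norm_sq,
    norm_neg, norm_smul, mul_pow, Real.norm_eq_abs, sq_abs] at this
  linarith

end Descent

theorem summable_of_le_sub_succ {a u : ℕ → ℝ} (ha : ∀ n, 0 ≤ a n) (hu : BddBelow (Set.range u))
    (h : ∀ n, a n ≤ u n - u (n + 1)) : Summable a := by
  obtain ⟨B, hB⟩ := hu
  refine summable_of_sum_range_le (c := u 0 - B) ha fun n => ?_
  calc ∑ k ∈ Finset.range n, a k ≤ ∑ k ∈ Finset.range n, (u k - u (k + 1)) :=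
        Finset.sum_le_sum fun k _ => h k
    _ = u 0 - u n := Finset.sum_range_sub' u n
    _ ≤ u 0 - B := by linarith [hB ⟨n, rfl⟩]

theorem stmt_4 {d : ℕ} (f : EuclideanSpace ℝ (Fin d) → ℝ) (L η : ℝ) (hL : 0 < L)
    (hdiff : Differentiable ℝ f)
    (hlip : LipschitzWith (Real.toNNReal L) (gradient f))
    (hbdd : BddBelow (Set.range f))
    (hη0 : 0 < η) (hη2 : η < 2 / L)
    (w : ℕ → EuclideanSpace ℝ (Fin d))
    (hrec : ∀ n, w (n + 1) = w n - η • gradient f (w n)) :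
    Tendsto (fun n => ‖gradient f (w n)‖) atTop (nhds 0) := by
  have hc : 0 < η * (1 - L * η / 2) := by
    have : L * η < 2 := by rwa [lt_div_iff₀ hL, mul_comm] at hη2
    apply mul_pos hη0; linarith
  have hdecrease : ∀ n,
      η * (1 - L * η / 2) * ‖gradient f (w n)‖ ^ 2 ≤ f (w n) - f (w (n + 1)) := fun n => by
    have := hdiff.apply_sub_smul_gradient_le hlip (w n) η
    rw [Real.coe_toNNReal L hL.le, ← hrec] at this
    linarith
  have hsum : Summable fun n => ‖gradient f (w n)‖ ^ 2 :=
    (summable_mul_left_iff hc.ne').1 <| summable_of_le_sub_succ (fun n => by positivity)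
      (hbdd.mono (Set.range_comp_subset_range w f)) hdecrease
  simpa [Real.sqrt_sq (norm_nonneg _)] using hsum.tendsto_atTop_zero.sqrt
end

section
/- Let f: ℝ^d → ℝ be differentiable with L-Lipschitz gradient, attaining its infimum, and satisfying the Polyak-Łojasiewicz condition ‖∇f(w)‖² ≥ c(f(w) - inf f) for all w with some c > 0. Then gradient descent with step size 1/L satisfies f(w_n) - inf f ≤ (1 - c/(2L))^n (f(w_0) - inf f). -/
/-!
Along the segment from `x` to `y`, the Lipschitz bound on the gradient makes
`t ↦ f (x + t • (y - x)) - t ⟪∇f x, y - x⟫ - K t² ‖y - x‖² / 2` antitone, which gives the descent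
lemma `f y ≤ f x + ⟪∇f x, y - x⟫ + K/2 ‖y - x‖²`. At `y = x - ∇f x / L` it says that a gradient
step decreases `f` by at least `‖∇f x‖² / (2L)`, and the PL inequality turns this into a decrease of
the optimality gap `f x - m` by the factor `1 - c/(2L)`. Iterating gives the geometric rate.
-/

open RealInnerProductSpace Set

section Smooth

variable {F : Type*} [NormedAddCommGroup F] [InnerProductSpace ℝ F] [CompleteSpace F]
  {f : F → ℝ} {K : NNReal}

theorem LipschitzWith.le_add_inner_gradient_add_sq (hf : Differentiable ℝ f)
    (hK : LipschitzWith K (gradient f)) (x y : F) :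
    f y ≤ f x + ⟪gradient f x, y - x⟫ + K / 2 * ‖y - x‖ ^ 2 := by
  set v := y - x
  let φ : ℝ → ℝ := fun t ↦ f (x + t • v) - t * ⟪gradient f x, v⟫ - K / 2 * t ^ 2 * ‖v‖ ^ 2
  have hline : ∀ t : ℝ, HasDerivAt (fun t : ℝ ↦ x + t • v) v t := fun t ↦ by
    simpa using ((hasDerivAt_id t).smul_const v).const_add x
  have hφ : ∀ t, HasDerivAt φ
      (⟪gradient f (x + t • v) - gradient f x, v⟫ - K * t * ‖v‖ ^ 2) t := fun t ↦ by
    have hft : HasDerivAt (fun t : ℝ ↦ f (x + t • v)) ⟪gradient f (x + t • v), v⟫ t := by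
      rw [inner_gradient_left]
      exact (hf _).hasFDerivAt.comp_hasDerivAt t (hline t)
    refine ((hft.sub ((hasDerivAt_id t).mul_const _)).sub
      (((hasDerivAt_pow 2 t).const_mul (K / 2 : ℝ)).mul_const (‖v‖ ^ 2))).congr_deriv ?_
    rw [inner_sub_left]; ring
  have hφ' : ∀ t ∈ interior (Ici (0 : ℝ)),
      ⟪gradient f (x + t • v) - gradient f x, v⟫ - K * t * ‖v‖ ^ 2 ≤ 0 := fun t ht ↦ by
    rw [interior_Ici, mem_Ioi] at ht
    have hdist : ‖gradient f (x + t • v) - gradient f x‖ ≤ K * (t * ‖v‖) := by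
      simpa [dist_eq_norm, norm_smul, abs_of_pos ht] using hK.dist_le_mul (x + t • v) x
    rw [sub_nonpos]
    calc ⟪gradient f (x + t • v) - gradient f x, v⟫
        ≤ ‖gradient f (x + t • v) - gradient f x‖ * ‖v‖ := real_inner_le_norm _ _
      _ ≤ K * (t * ‖v‖) * ‖v‖ := by gcongr
      _ = K * t * ‖v‖ ^ 2 := by ring
  have hanti : AntitoneOn φ (Ici 0) :=
    antitoneOn_of_hasDerivWithinAt_nonpos (convex_Ici 0)
      (fun t _ ↦ (hφ t).continuousAt.continuousWithinAt)
      (fun t _ ↦ (hφ t).hasDerivWithinAt) hφ'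
  have := hanti (mem_Ici.2 le_rfl) (mem_Ici.2 zero_le_one) zero_le_one
  simp only [φ, zero_smul, add_zero, one_smul, v, add_sub_cancel] at this
  linarith

theorem LipschitzWith.le_sub_of_gradient_step (hf : Differentiable ℝ f)
    (hK : LipschitzWith K (gradient f)) (x : F) :
    f (x - (1 / K : ℝ) • gradient f x) ≤ f x - 1 / (2 * K) * ‖gradient f x‖ ^ 2 := by
  rcases eq_or_ne (K : ℝ) 0 with hK0 | hK0
  · simp [hK0] -- `1 / 0 = 0`: the step is trivial and so is the claimed decrease
  have h := hK.le_add_inner_gradient_add_sq hf x (x - (1 / K : ℝ) • gradient f x)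
  rw [sub_sub_cancel_left, inner_neg_right, real_inner_smul_right, real_inner_self_eq_norm_sq,
    norm_neg, norm_smul, Real.norm_of_nonneg (by positivity)] at h
  convert h using 1
  field_simp
  ring

theorem LipschitzWith.sub_le_mul_of_gradient_step (hf : Differentiable ℝ f)
    (hK : LipschitzWith K (gradient f)) {c m : ℝ} {x : F}
    (hPL : c * (f x - m) ≤ ‖gradient f x‖ ^ 2) :
    f (x - (1 / K : ℝ) • gradient f x) - m ≤ (1 - c / (2 * K)) * (f x - m) := by
  have hstep := hK.le_sub_of_gradient_step hf x
  have : 1 / (2 * K) * (c * (f x - m)) ≤ 1 / (2 * K) * ‖gradient f x‖ ^ 2 := by gcongr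
  linarith [show 1 / (2 * K) * (c * (f x - m)) = c / (2 * K) * (f x - m) by ring]

end Smooth

theorem le_pow_mul_of_forall_le_mul {a : ℕ → ℝ} {r : ℝ} (ha : ∀ n, 0 ≤ a n)
    (h : ∀ n, a (n + 1) ≤ r * a n) (n : ℕ) : a n ≤ r ^ n * a 0 := by
  rcases le_or_gt 0 r with hr | hr
  · induction n with
    | zero => simp
    | succ n ih =>
      calc a (n + 1) ≤ r * a n := h n
        _ ≤ r * (r ^ n * a 0) := by gcongr
        _ = r ^ (n + 1) * a 0 := by ring
  · -- a contraction with negative ratio forces the nonnegative sequence to vanish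
    have ha0 : a 0 = 0 := le_antisymm (by nlinarith [h 0, ha 1]) (ha 0)
    cases n with
    | zero => simp
    | succ n => rw [ha0, mul_zero]; nlinarith [h n, ha n, ha (n + 1)]

theorem stmt_16_general {d : ℕ} (f : EuclideanSpace ℝ (Fin d) → ℝ) (L c m : ℝ)
    (hL : 0 < L)
    (hdiff : Differentiable ℝ f)
    (hlip : LipschitzWith (Real.toNNReal L) (gradient f))
    (hlow : ∀ x, m ≤ f x)
    (hPL : ∀ x, ‖gradient f x‖ ^ 2 ≥ c * (f x - m))
    (w : ℕ → EuclideanSpace ℝ (Fin d))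
    (hrec : ∀ n, w (n + 1) = w n - (1 / L) • gradient f (w n)) :
    ∀ n : ℕ, f (w n) - m ≤ (1 - c / (2 * L)) ^ n * (f (w 0) - m) := by
  have hL' : (L.toNNReal : ℝ) = L := Real.coe_toNNReal L hL.le
  refine le_pow_mul_of_forall_le_mul (fun n ↦ sub_nonneg.2 (hlow (w n))) fun n ↦ ?_
  have := hlip.sub_le_mul_of_gradient_step hdiff (hPL (w n))
  rwa [hL', ← hrec n] at this

theorem stmt_16 {d : ℕ} (f : EuclideanSpace ℝ (Fin d) → ℝ) (L c m : ℝ)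
    (hL : 0 < L) (hc : 0 < c)
    (hdiff : Differentiable ℝ f)
    (hlip : LipschitzWith (Real.toNNReal L) (gradient f))
    (hlow : ∀ x, m ≤ f x) (hatt : ∃ x, f x = m)
    (hPL : ∀ x, ‖gradient f x‖ ^ 2 ≥ c * (f x - m))
    (w : ℕ → EuclideanSpace ℝ (Fin d))
    (hrec : ∀ n, w (n + 1) = w n - (1 / L) • gradient f (w n)) :
    ∀ n : ℕ, f (w n) - m ≤ (1 - c / (2 * L)) ^ n * (f (w 0) - m) :=
  stmt_16_general f L c m hL hdiff hlip hlow hPL w hrec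
end
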